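/- arXiv:0909.3162 — 4 statements merged into one kernel-verified Lean document; each statement's English description precedes it below -/
import Mathlib

section
/- For a monad T = (T, μ, η) on a category A, if Tμ = μT as natural transformations TTT → TT, then μ : TT → T is an isomorphism. -/
open CategoryTheory

namespace CategoryTheory.Monad

variable {A : Type*} [Category A] (T : Monad A) {X : A}

/- Naturality of `μ` at `η X` reads `μ X ≫ T(η X) = TT(η X) ≫ μ (T X)`; replacing `μ (T X)` by
`T(μ X)` turns the right side into `T(T(η X) ≫ μ X) = T(𝟙) = 𝟙`. -/
theorem μ_app_comp_map_η_app (hX : T.map (T.μ.app X) = T.μ.app (T.obj X)) :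
    T.μ.app X ≫ T.map (T.η.app X) = 𝟙 _ := by
  have hnat := T.μ.naturality (T.η.app X)
  rw [Functor.comp_map, ← hX, ← Functor.map_comp, right_unit, Functor.map_id] at hnat
  exact hnat.symm

theorem isIso_μ_app (hX : T.map (T.μ.app X) = T.μ.app (T.obj X)) : IsIso (T.μ.app X) :=
  ⟨T.map (T.η.app X), T.μ_app_comp_map_η_app hX, T.right_unit X⟩

end CategoryTheory.Monad

theorem stmt_8 {A : Type*} [Category A] (T : Monad A)
    (h : ∀ (X : A), T.map (T.μ.app X) = T.μ.app (T.obj X)) :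
    IsIso T.μ :=
  have := fun X => T.isIso_μ_app (h X)
  NatIso.isIso_of_isIso_app T.μ
end

section
/- For a comonad S = (S, δ, ε) on a category A, the comultiplication δ : S → SS is an isomorphism if and only if Sε = εS as natural transformations SS → S. -/
open CategoryTheory

namespace CategoryTheory.Comonad

variable {A : Type*} [Category A] (S : Comonad A)

/-- Both `S.map (S.ε.app X)` and `S.ε.app (S.obj X)` are retractions of the isomorphism `S.δ.app X`. -/
theorem map_counit_app_eq_counit_app_obj_of_isIso_δ [IsIso S.δ] (X : A) :
    S.map (S.ε.app X) = S.ε.app (S.obj X) :=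
  (cancel_epi (S.δ.app X)).mp ((S.right_counit X).trans (S.left_counit X).symm)

theorem counit_app_obj_comp_δ_app_of_map_counit_app_eq
    (h : ∀ X : A, S.map (S.ε.app X) = S.ε.app (S.obj X)) (X : A) :
    S.ε.app (S.obj X) ≫ S.δ.app X = 𝟙 _ := by
  calc S.ε.app (S.obj X) ≫ S.δ.app X = S.map (S.δ.app X) ≫ S.ε.app (S.obj (S.obj X)) :=
        (S.ε.naturality (S.δ.app X)).symm
    _ = S.map (S.δ.app X ≫ S.ε.app (S.obj X)) := by rw [← h, S.map_comp]
    _ = 𝟙 _ := by rw [S.left_counit, S.map_id]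

theorem isIso_δ_of_map_counit_app_eq (h : ∀ X : A, S.map (S.ε.app X) = S.ε.app (S.obj X)) :
    IsIso S.δ := by
  rw [NatTrans.isIso_iff_isIso_app]
  exact fun X => ⟨S.ε.app (S.obj X), S.left_counit X,
    S.counit_app_obj_comp_δ_app_of_map_counit_app_eq h X⟩

end CategoryTheory.Comonad

theorem stmt_10 {A : Type*} [Category A] (S : Comonad A) :
    IsIso S.δ ↔ ∀ (X : A), S.map (S.ε.app X) = S.ε.app (S.obj X) :=
  ⟨fun _ => S.map_counit_app_eq_counit_app_obj_of_isIso_δ, S.isIso_δ_of_map_counit_app_eq⟩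
end

section
/- For an adjunction F ⊣ G with unit η and counit ε, the natural transformation ηG : G → GFG is an isomorphism if and only if GεF : GFGF → GF is an isomorphism. -/
/-! By a triangle identity, `G ε_Y` is a right inverse of `η_{GY}`; so when `η_G` is invertible, `G ε_F`
is its inverse. Conversely, naturality of `η` gives `G ε_Y ≫ η_{GY} = η_{GFGY} ≫ GFG ε_Y`, which is
`GF (η_{GY} ≫ G ε_Y) = 𝟙` once `η_{GF} = GF η` is known. -/

open CategoryTheory

namespace CategoryTheory.Adjunction

variable {C D : Type*} [Category C] [Category D] {F : C ⥤ D} {G : D ⥤ C} (adj : F ⊣ G)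

lemma isIso_map_counit_app_of_isIso_unit_app (Y : D) [IsIso (adj.unit.app (G.obj Y))] :
    IsIso (G.map (adj.counit.app Y)) := by
  rw [← IsIso.inv_eq_of_hom_inv_id (adj.right_triangle_components Y)]
  infer_instance

/-- Both sides are sections of the isomorphism `G ε_{FX}`, by the two triangle identities. -/
lemma unit_app_obj_obj_eq_map_map_unit_app (X : C)
    [IsIso (G.map (adj.counit.app (F.obj X)))] :
    adj.unit.app (G.obj (F.obj X)) = G.map (F.map (adj.unit.app X)) := by
  rw [← cancel_mono (G.map (adj.counit.app (F.obj X))), adj.right_triangle_components,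
    ← G.map_comp]
  simp

lemma isIso_unit_app_of_isIso_map_counit_app (Y : D)
    [IsIso (G.map (adj.counit.app (F.obj (G.obj Y))))] :
    IsIso (adj.unit.app (G.obj Y)) := by
  refine ⟨G.map (adj.counit.app Y), adj.right_triangle_components Y, ?_⟩
  calc G.map (adj.counit.app Y) ≫ adj.unit.app (G.obj Y)
      = adj.unit.app (G.obj (F.obj (G.obj Y))) ≫ G.map (F.map (G.map (adj.counit.app Y))) :=
        (adj.unit_naturality _).symm
    _ = G.map (F.map (adj.unit.app (G.obj Y) ≫ G.map (adj.counit.app Y))) := by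
        rw [adj.unit_app_obj_obj_eq_map_map_unit_app, F.map_comp, G.map_comp]
    _ = 𝟙 _ := by simp

end CategoryTheory.Adjunction

theorem stmt_14 {A B : Type*} [Category A] [Category B] (F : A ⥤ B) (G : B ⥤ A)
    (adj : F ⊣ G) :
    (∀ (Y : B), IsIso (adj.unit.app (G.obj Y))) ↔
    (∀ (X : A), IsIso (G.map (adj.counit.app (F.obj X)))) :=
  ⟨fun _ X => adj.isIso_map_counit_app_of_isIso_unit_app (F.obj X),
    fun _ Y => adj.isIso_unit_app_of_isIso_map_counit_app Y⟩
end

section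
/- Let F ⊣ G be an adjunction with unit η and counit ε such that η_A is a strong (extremal) epimorphism for all A and ε_B is an isomorphism for some fixed object B' of B. Then for any monomorphism f : A → G(B') in A, the component η_A is an isomorphism; that is, the full subcategory of objects A with η_A an isomorphism is closed under subobjects of objects of the form G(B') with ε_{B'} an isomorphism. -/
/-! Every `f : X ⟶ G.obj B'` factors through the unit as `η_X ≫ G.map (F.map f ≫ ε_B')`, so if `f`
is mono then so is `η_X`; an extremal epimorphism that is also a monomorphism is an isomorphism. -/

open CategoryTheory

/-- An epimorphism `e` is extremal if whenever `e = f ≫ m` with `m` a monomorphism,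
`m` is an isomorphism. -/
def ExtremalEpi' {C : Type*} [Category C] {X Y : C} (e : X ⟶ Y) : Prop :=
  Epi e ∧ ∀ ⦃Z : C⦄ (f : X ⟶ Z) (m : Z ⟶ Y), Mono m → e = f ≫ m → IsIso m

theorem ExtremalEpi'.isIso_of_mono {C : Type*} [Category C] {X Y : C} {e : X ⟶ Y}
    (he : ExtremalEpi' e) [Mono e] : IsIso e :=
  he.2 (𝟙 X) e inferInstance (Category.id_comp e).symm

theorem CategoryTheory.Adjunction.mono_unit_app_of_mono {A B : Type*} [Category A] [Category B]
    {F : A ⥤ B} {G : B ⥤ A} (adj : F ⊣ G) {X : A} {Y : B} (f : X ⟶ G.obj Y) [hf : Mono f] :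
    Mono (adj.unit.app X) := by
  have hfactor : adj.unit.app X ≫ G.map (F.map f ≫ adj.counit.app Y) = f :=
    (adj.unit_comp_map_eq_iff _ f).2 rfl
  rw [← hfactor] at hf
  exact mono_of_mono _ (G.map (F.map f ≫ adj.counit.app Y))

theorem stmt_19_general {A B : Type*} [Category A] [Category B] (F : A ⥤ B) (G : B ⥤ A)
    (adj : F ⊣ G) (hext : ∀ (X : A), ExtremalEpi' (adj.unit.app X))
    (B' : B)
    (X : A) (f : X ⟶ G.obj B') (hf : Mono f) :
    IsIso (adj.unit.app X) :=
  have := adj.mono_unit_app_of_mono f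
  (hext X).isIso_of_mono

theorem stmt_19 {A B : Type*} [Category A] [Category B] (F : A ⥤ B) (G : B ⥤ A)
    (adj : F ⊣ G) (hext : ∀ (X : A), ExtremalEpi' (adj.unit.app X))
    (B' : B) (hB' : IsIso (adj.counit.app B'))
    (X : A) (f : X ⟶ G.obj B') (hf : Mono f) :
    IsIso (adj.unit.app X) :=
  stmt_19_general F G adj hext B' X f hf
end
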